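/- Let t_N, r_N be the comb-graph amplitudes t_N = −ε^{1−N}/(ε U_{N−2}(ζ) − (1+iβ)U_{N−1}(ζ)), r_N = iβ U_{N−1}(ζ)/(ε U_{N−2}(ζ) − (1+iβ)U_{N−1}(ζ)), and let t = t_1, r = r_1. Then they satisfy the factorization recursions r_{N+1} = r_N + ε^{2N} r t_N² / (1 − ε² r r_N) and t_{N+1} = t t_N / (1 − ε² r r_N). -/

import Mathlib

open Complex Polynomial

/-!
Write `u_n = U_n(ζ)`, `s = iβ` and `D_N = ε u_{N-2} - (1 + s) u_{N-1}`. The relation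
`ζ = cos kℓ + β sin kℓ` says `2ζε = ε²(1 - s) + (1 + s)`; with the three-term recurrence it gives
`ε D_{N+1} = (1 + s) D_N + s²ε² u_{N-1}`, which turns the denominator `1 - ε² r r_N` into
`ε D_{N+1} / ((1 + s) D_N)`. The Cassini-type identity `u_N u_{N-2} = u_{N-1}² - 1` gives
`u_N D_N = u_{N-1} D_{N+1} - ε`, and the two recursions reduce to these identities. Only field
arithmetic is involved, so all of this holds over any field and for every integer `N`.
-/

namespace Polynomial.Chebyshev

variable (R : Type*) [CommRing R]

theorem U_sq_add_U_sq (n : ℤ) :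
    U R n ^ 2 + U R (n + 1) ^ 2 - 2 * X * U R n * U R (n + 1) = 1 := by
  have := congrArg (·.comp (2 * X)) (S_sq_add_S_sq R n)
  simp only [sub_comp, add_comp, mul_comp, pow_comp, X_comp, one_comp, S_comp_two_mul_X] at this
  linear_combination this

end Polynomial.Chebyshev

theorem two_mul_cos_add_mul_sin_mul_exp (β θ : ℝ) :
    2 * ((Real.cos θ + β * Real.sin θ : ℝ) : ℂ) * exp (I * θ) =
      exp (I * θ) ^ 2 * (1 - I * β) + (1 + I * β) := by
  have hinv : exp (θ * I) * exp (-(θ * I)) = 1 := by rw [← Complex.exp_add]; simp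
  push_cast
  rw [Complex.cos, Complex.sin, mul_comm I]
  field_simp
  linear_combination (1 + I * β) * hinv

open Polynomial.Chebyshev

section CombGraph

variable {K : Type*} [Field K] (s ε z : K)

-- `s` stands for `iβ` and `z` for `ζ`.
noncomputable def combDen (n : ℤ) : K :=
  ε * (U K (n - 2)).eval z - (1 + s) * (U K (n - 1)).eval z

noncomputable def combT (n : ℤ) : K := -ε ^ (1 - n) / combDen s ε z n

noncomputable def combR (n : ℤ) : K := s * (U K (n - 1)).eval z / combDen s ε z n

theorem combDen_one : combDen s ε z 1 = -(1 + s) := by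
  norm_num [combDen, U_neg_one, U_zero]

theorem combT_one : combT s ε z 1 = 1 / (1 + s) := by
  rw [combT, combDen_one, sub_self, zpow_zero, neg_div_neg_eq]

theorem combR_one : combR s ε z 1 = -s / (1 + s) := by
  rw [combR, combDen_one, sub_self, U_zero, eval_one, mul_one, div_neg, neg_div]

theorem U_eval_mul_combDen (n : ℤ) :
    (U K n).eval z * combDen s ε z n = (U K (n - 1)).eval z * combDen s ε z (n + 1) - ε := by
  have hsq := congrArg (eval z) (U_sq_add_U_sq K (n - 1))
  have hrec := congrArg (eval z) (U_sub_two K n)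
  simp only [eval_add, eval_sub, eval_mul, eval_pow, eval_ofNat, eval_X, eval_one,
    sub_add_cancel] at hsq hrec
  rw [combDen, combDen, add_sub_cancel_right, add_sub_assoc, show (1 : ℤ) - 2 = -1 by norm_num,
    ← sub_eq_add_neg]
  linear_combination ε * (U K n).eval z * hrec - ε * hsq

variable {s ε z}

theorem mul_combDen_add_one (hz : 2 * z * ε = ε ^ 2 * (1 - s) + (1 + s)) (n : ℤ) :
    ε * combDen s ε z (n + 1) =
      (1 + s) * combDen s ε z n + s ^ 2 * ε ^ 2 * (U K (n - 1)).eval z := by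
  have hrec := congrArg (eval z) (U_sub_two K n)
  simp only [eval_sub, eval_mul, eval_ofNat, eval_X] at hrec
  rw [combDen, combDen, add_sub_cancel_right, add_sub_assoc, show (1 : ℤ) - 2 = -1 by norm_num,
    ← sub_eq_add_neg]
  linear_combination -(1 + s) * ε * hrec - (1 + s) * (U K (n - 1)).eval z * hz

theorem one_sub_mul_combR (hz : 2 * z * ε = ε ^ 2 * (1 - s) + (1 + s)) (hs : 1 + s ≠ 0)
    {n : ℤ} (hD : combDen s ε z n ≠ 0) :
    1 - ε ^ 2 * combR s ε z 1 * combR s ε z n =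
      ε * combDen s ε z (n + 1) / ((1 + s) * combDen s ε z n) := by
  rw [combR_one, combR, mul_combDen_add_one hz]
  field_simp
  ring

theorem zpow_two_mul_mul_combT_sq (hε : ε ≠ 0) (n : ℤ) :
    ε ^ (2 * n) * combT s ε z n ^ 2 = (ε / combDen s ε z n) ^ 2 := by
  rw [combT, neg_div, neg_sq, div_pow, div_pow, mul_div_assoc', ← zpow_natCast (ε ^ (1 - n)),
    ← zpow_mul, ← zpow_add₀ hε, ← zpow_natCast ε]
  congr 2
  push_cast
  ring

theorem combR_add_one (hz : 2 * z * ε = ε ^ 2 * (1 - s) + (1 + s)) (hε : ε ≠ 0)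
    (hs : 1 + s ≠ 0) {n : ℤ} (hD : combDen s ε z n ≠ 0) (hD' : combDen s ε z (n + 1) ≠ 0) :
    combR s ε z (n + 1) = combR s ε z n +
      ε ^ (2 * n) * combR s ε z 1 * combT s ε z n ^ 2 /
        (1 - ε ^ 2 * combR s ε z 1 * combR s ε z n) := by
  have hcross := U_eval_mul_combDen s ε z n
  rw [mul_right_comm _ (combR s ε z 1), zpow_two_mul_mul_combT_sq hε, one_sub_mul_combR hz hs hD,
    combR_one, combR, combR, add_sub_cancel_right]
  field_simp
  linear_combination s * hcross

theorem combT_add_one (hz : 2 * z * ε = ε ^ 2 * (1 - s) + (1 + s)) (hε : ε ≠ 0)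
    (hs : 1 + s ≠ 0) {n : ℤ} (hD : combDen s ε z n ≠ 0) :
    combT s ε z (n + 1) = combT s ε z 1 * combT s ε z n /
      (1 - ε ^ 2 * combR s ε z 1 * combR s ε z n) := by
  rw [one_sub_mul_combR hz hs hD, combT_one, combT, combT, show 1 - (n + 1) = -n by ring,
    zpow_sub₀ hε, zpow_one, zpow_neg]
  field_simp

end CombGraph

theorem comb_graph_factorization_general (β k ℓ : ℝ)
    (ε : ℂ) (hε : ε = Complex.exp (Complex.I * k * ℓ))
    (ζ : ℝ) (hζ : ζ = Real.cos (k * ℓ) + β * Real.sin (k * ℓ))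
    (Den : ℕ → ℂ)
    (hDen : ∀ N : ℕ, Den N = ε * (Polynomial.Chebyshev.U ℂ ((N : ℤ) - 2)).eval (ζ : ℂ)
        - (1 + Complex.I * β) * (Polynomial.Chebyshev.U ℂ ((N : ℤ) - 1)).eval (ζ : ℂ))
    (hDen0 : ∀ N : ℕ, Den N ≠ 0)
    (tN rN : ℕ → ℂ)
    (htN : ∀ N : ℕ, tN N = -ε ^ (1 - (N : ℤ)) / Den N)
    (hrN : ∀ N : ℕ, rN N = Complex.I * β *
      (Polynomial.Chebyshev.U ℂ ((N : ℤ) - 1)).eval (ζ : ℂ) / Den N)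
    (t r : ℂ) (ht : t = tN 1) (hr : r = rN 1) :
    ∀ N : ℕ, 1 ≤ N →
      rN (N + 1) = rN N + ε ^ (2 * N) * r * (tN N) ^ 2 / (1 - ε ^ 2 * r * rN N) ∧
      tN (N + 1) = t * tN N / (1 - ε ^ 2 * r * rN N) := by
  intro N _
  have hz : 2 * (ζ : ℂ) * ε = ε ^ 2 * (1 - I * β) + (1 + I * β) := by
    rw [hε, hζ, mul_assoc I, ← ofReal_mul]
    exact two_mul_cos_add_mul_sin_mul_exp β (k * ℓ)
  have hε0 : ε ≠ 0 := hε ▸ Complex.exp_ne_zero _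
  obtain rfl : Den = fun N : ℕ => combDen (I * β) ε ζ N := funext hDen
  obtain rfl : tN = fun N : ℕ => combT (I * β) ε ζ N := funext htN
  obtain rfl : rN = fun N : ℕ => combR (I * β) ε ζ N := funext hrN
  have hs : 1 + I * β ≠ 0 := by
    simpa only [Nat.cast_one, combDen_one, neg_ne_zero] using hDen0 1
  subst ht hr
  have hD := hDen0 N
  have hD' := hDen0 (N + 1)
  simp only [Nat.cast_add, Nat.cast_one] at hD' ⊢
  rw [← zpow_natCast, Nat.cast_mul, Nat.cast_ofNat]
  exact ⟨combR_add_one hz hε0 hs hD hD', combT_add_one hz hε0 hs hD⟩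

/-- The comb-graph amplitudes satisfy the S-matrix factorization recursions. -/
theorem comb_graph_factorization (β k ℓ : ℝ)
    (ε : ℂ) (hε : ε = Complex.exp (Complex.I * k * ℓ))
    (ζ : ℝ) (hζ : ζ = Real.cos (k * ℓ) + β * Real.sin (k * ℓ))
    (Den : ℕ → ℂ)
    (hDen : ∀ N : ℕ, Den N = ε * (Polynomial.Chebyshev.U ℂ ((N : ℤ) - 2)).eval (ζ : ℂ)
        - (1 + Complex.I * β) * (Polynomial.Chebyshev.U ℂ ((N : ℤ) - 1)).eval (ζ : ℂ))
    (hDen0 : ∀ N : ℕ, Den N ≠ 0)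
    (tN rN : ℕ → ℂ)
    (htN : ∀ N : ℕ, tN N = -ε ^ (1 - (N : ℤ)) / Den N)
    (hrN : ∀ N : ℕ, rN N = Complex.I * β *
      (Polynomial.Chebyshev.U ℂ ((N : ℤ) - 1)).eval (ζ : ℂ) / Den N)
    (t r : ℂ) (ht : t = tN 1) (hr : r = rN 1)
    (hnz : ∀ N : ℕ, 1 - ε ^ 2 * r * rN N ≠ 0) :
    ∀ N : ℕ, 1 ≤ N →
      rN (N + 1) = rN N + ε ^ (2 * N) * r * (tN N) ^ 2 / (1 - ε ^ 2 * r * rN N) ∧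
      tN (N + 1) = t * tN N / (1 - ε ^ 2 * r * rN N) :=
  comb_graph_factorization_general β k ℓ ε hε ζ hζ Den hDen hDen0 tN rN htN hrN t r ht hr
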